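/- Incremental cyclo-dissipativity of the quadratic droop controller (Theorem 1, item 2): let (θ̄, ω̄, V̄) satisfy V̄ ∈ ℝⁿ_{>0} and ω̄ = ω⁰·1 for some ω⁰ ∈ ℝ, put P̄ := P(θ̄,V̄), Q̄ := Q(θ̄,V̄), let ū_P ∈ ℝⁿ satisfy 0 = −(ω̄ − ω*) − K_P(P̄ − P*) + ū_P, and let ū_Q ∈ ℝⁿ satisfy 0 = −K_Q Q̄ − [V̄](V̄ − ū_Q). Then for every θ ∈ ℝⁿ, ω ∈ ℝⁿ, V ∈ ℝⁿ_{>0} and u_P, u_Q ∈ ℝⁿ, defining g := [V]⁻¹ Q(θ,V) − [V̄]⁻¹ Q̄ + K_Q⁻¹ (V − V̄), the following identity holds: (P(θ,V) − P̄)ᵀ ω + (ω − ω̄)ᵀ K_P⁻¹ (−(ω − ω*) − K_P(P(θ,V) − P*) + u_P) + gᵀ T_Q⁻¹ (−K_Q Q(θ,V) − [V](V − u_Q)) = −(ω − ω̄)ᵀ K_P⁻¹ (ω − ω̄) + (ω − ω̄)ᵀ K_P⁻¹ (u_P − ū_P) − gᵀ T_Q⁻¹ K_Q [V] g + gᵀ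 T_Q⁻¹ [V] (u_Q − ū_Q). -/

import Mathlib

open Real Finset Matrix

/-- `B_ii = b̂_i + ∑_{j ≠ i} B_ij`. -/
noncomputable def Bdiag (n : ℕ) (B : Fin n → Fin n → ℝ) (bhat : Fin n → ℝ) (i : Fin n) : ℝ :=
  bhat i + ∑ j ∈ Finset.univ.erase i, B i j

/-- Active power `P_i(θ,V) = ∑_{j ≠ i} B_ij V_i V_j sin(θ_i − θ_j)`. -/
noncomputable def activeP (n : ℕ) (B : Fin n → Fin n → ℝ) (θ V : Fin n → ℝ) (i : Fin n) : ℝ :=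
  ∑ j ∈ Finset.univ.erase i, B i j * V i * V j * Real.sin (θ i - θ j)

/-- Reactive power `Q_i(θ,V) = B_ii V_i² − ∑_{j ≠ i} B_ij V_i V_j cos(θ_i − θ_j)`. -/
noncomputable def reactiveQ (n : ℕ) (B : Fin n → Fin n → ℝ) (bhat : Fin n → ℝ)
    (θ V : Fin n → ℝ) (i : Fin n) : ℝ :=
  Bdiag n B bhat i * V i ^ 2
    - ∑ j ∈ Finset.univ.erase i, B i j * V i * V j * Real.cos (θ i - θ j)

/-! At each node the identity is pure algebra once the equilibrium relations are substituted:
the equilibrium for `ū_Q` turns `K_Q Q(θ,V)` into `K_Q [V] g − [V](V − ū_Q)`, and the one for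
`ū_P` leaves, besides the claimed terms, the cross term `ω⁰ (P_i(θ,V) − P̄_i)`. Since the lines
are lossless (`B` symmetric, `sin` odd), the total active power `∑ᵢ Pᵢ` vanishes at every
operating point, so the cross terms sum to zero. -/

theorem Finset.sum_sum_eq_zero_of_antisymm {ι M : Type*} [Fintype ι] [AddCommGroup M]
    [IsAddTorsionFree M] (f : ι → ι → M) (hf : ∀ i j, f j i = -f i j) :
    ∑ i, ∑ j, f i j = 0 := by
  refine self_eq_neg.mp ?_
  calc ∑ i, ∑ j, f i j = ∑ i, ∑ j, f j i := Finset.sum_comm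
    _ = ∑ i, ∑ j, -f i j := sum_congr rfl fun i _ => sum_congr rfl fun j _ => hf i j
    _ = -∑ i, ∑ j, f i j := by simp only [sum_neg_distrib]

theorem activeP_eq_sum (n : ℕ) (B : Fin n → Fin n → ℝ) (θ V : Fin n → ℝ) (i : Fin n) :
    activeP n B θ V i = ∑ j, B i j * V i * V j * Real.sin (θ i - θ j) :=
  Finset.sum_erase _ (by simp)

theorem sum_activeP_eq_zero (n : ℕ) (B : Fin n → Fin n → ℝ) (hB : ∀ i j, B i j = B j i)
    (θ V : Fin n → ℝ) : ∑ i, activeP n B θ V i = 0 := by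
  simp only [activeP_eq_sum]
  refine Finset.sum_sum_eq_zero_of_antisymm _ fun i j => ?_
  rw [hB j i, ← neg_sub, Real.sin_neg]
  ring

theorem droop_frequency_eq {p pbar ω ω0 ωs Ps kP uP uPbar : ℝ} (hkP : kP ≠ 0)
    (huPbar : 0 = -(ω0 - ωs) - kP * (pbar - Ps) + uPbar) :
    (p - pbar) * ω + (ω - ω0) * kP⁻¹ * (-(ω - ωs) - kP * (p - Ps) + uP)
      = -((ω - ω0) * kP⁻¹ * (ω - ω0)) + (ω - ω0) * kP⁻¹ * (uP - uPbar)
        + ω0 * (p - pbar) := by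
  field_simp
  linear_combination -(ω - ω0) * huPbar

theorem droop_voltage_eq {q qbar V Vbar kQ uQ uQbar g : ℝ} (w : ℝ) (hV : V ≠ 0)
    (hVbar : Vbar ≠ 0) (hkQ : kQ ≠ 0) (huQbar : 0 = -(kQ * qbar) - Vbar * (Vbar - uQbar))
    (hg : g = q / V - qbar / Vbar + kQ⁻¹ * (V - Vbar)) :
    g * w * (-(kQ * q) - V * (V - uQ))
      = -(g * w * (kQ * V) * g) + g * w * V * (uQ - uQbar) := by
  have hq : -(kQ * q) - V * (V - uQ) = -(kQ * V) * g + V * (uQ - uQbar) := by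
    rw [hg]
    field_simp
    linear_combination -V * huQbar
  rw [hq]
  ring

theorem quadratic_droop_incremental_cyclo_dissipativity_general
    (n : ℕ)
    (B : Fin n → Fin n → ℝ)
    (hBsymm : ∀ i j, B i j = B j i)
    (bhat : Fin n → ℝ)
    (kP TQ kQ : Fin n → ℝ)
    (hkP : ∀ i, 0 < kP i)
    (hkQ : ∀ i, 0 < kQ i)
    (ωstar Pstar : Fin n → ℝ)
    (θbar ωbar Vbar : Fin n → ℝ) (ω0 : ℝ)
    (hVbar : ∀ i, 0 < Vbar i)
    (hωbar : ωbar = fun _ => ω0)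
    (uPbar uQbar : Fin n → ℝ)
    (huPbar : ∀ i, 0 = -(ωbar i - ωstar i)
        - kP i * (activeP n B θbar Vbar i - Pstar i) + uPbar i)
    (huQbar : ∀ i, 0 = -(kQ i * reactiveQ n B bhat θbar Vbar i)
        - Vbar i * (Vbar i - uQbar i))
    (θ ω V uP uQ : Fin n → ℝ) (hV : ∀ i, 0 < V i)
    (g : Fin n → ℝ)
    (hg : ∀ i, g i = reactiveQ n B bhat θ V i / V i
        - reactiveQ n B bhat θbar Vbar i / Vbar i + (kQ i)⁻¹ * (V i - Vbar i)) :
    ∑ i, (activeP n B θ V i - activeP n B θbar Vbar i) * ω i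
      + ∑ i, (ω i - ωbar i) * (kP i)⁻¹
          * (-(ω i - ωstar i) - kP i * (activeP n B θ V i - Pstar i) + uP i)
      + ∑ i, g i * (TQ i)⁻¹
          * (-(kQ i * reactiveQ n B bhat θ V i) - V i * (V i - uQ i))
    =
    -∑ i, (ω i - ωbar i) * (kP i)⁻¹ * (ω i - ωbar i)
      + ∑ i, (ω i - ωbar i) * (kP i)⁻¹ * (uP i - uPbar i)
      - ∑ i, g i * (TQ i)⁻¹ * (kQ i * V i) * g i
      + ∑ i, g i * (TQ i)⁻¹ * V i * (uQ i - uQbar i) := by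
  subst hωbar
  have hfreq i := droop_frequency_eq (p := activeP n B θ V i) (ω := ω i) (uP := uP i)
    (hkP i).ne' (huPbar i)
  have hvolt i := droop_voltage_eq (uQ := uQ i) (TQ i)⁻¹ (hV i).ne' (hVbar i).ne' (hkQ i).ne'
    (huQbar i) (hg i)
  have hcross : ∑ i, ω0 * (activeP n B θ V i - activeP n B θbar Vbar i) = 0 := by
    rw [← mul_sum, sum_sub_distrib, sum_activeP_eq_zero n B hBsymm,
      sum_activeP_eq_zero n B hBsymm, sub_self, mul_zero]
  simp only [← sum_add_distrib, hfreq, hvolt]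
  simp only [sum_add_distrib, sum_neg_distrib, hcross]
  ring

/-- Incremental cyclo-dissipativity of the quadratic droop controller
(Theorem 1, item 2). -/
theorem quadratic_droop_incremental_cyclo_dissipativity
    (n : ℕ) (G : SimpleGraph (Fin n)) [DecidableRel G.Adj]
    (hconn : G.Connected)
    (B : Fin n → Fin n → ℝ)
    (hBsymm : ∀ i j, B i j = B j i)
    (hBpos : ∀ i j, G.Adj i j → 0 < B i j)
    (hBzero : ∀ i j, ¬ G.Adj i j → B i j = 0)
    (bhat : Fin n → ℝ) (hbhat : ∀ i, 0 ≤ bhat i)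
    (kP TP TQ kQ : Fin n → ℝ)
    (hkP : ∀ i, 0 < kP i) (hTP : ∀ i, 0 < TP i)
    (hTQ : ∀ i, 0 < TQ i) (hkQ : ∀ i, 0 < kQ i)
    (ωstar Pstar : Fin n → ℝ)
    (θbar ωbar Vbar : Fin n → ℝ) (ω0 : ℝ)
    (hVbar : ∀ i, 0 < Vbar i)
    (hωbar : ωbar = fun _ => ω0)
    (uPbar uQbar : Fin n → ℝ)
    (huPbar : ∀ i, 0 = -(ωbar i - ωstar i)
        - kP i * (activeP n B θbar Vbar i - Pstar i) + uPbar i)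
    (huQbar : ∀ i, 0 = -(kQ i * reactiveQ n B bhat θbar Vbar i)
        - Vbar i * (Vbar i - uQbar i))
    (θ ω V uP uQ : Fin n → ℝ) (hV : ∀ i, 0 < V i)
    (g : Fin n → ℝ)
    (hg : ∀ i, g i = reactiveQ n B bhat θ V i / V i
        - reactiveQ n B bhat θbar Vbar i / Vbar i + (kQ i)⁻¹ * (V i - Vbar i)) :
    ∑ i, (activeP n B θ V i - activeP n B θbar Vbar i) * ω i
      + ∑ i, (ω i - ωbar i) * (kP i)⁻¹
          * (-(ω i - ωstar i) - kP i * (activeP n B θ V i - Pstar i) + uP i)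
      + ∑ i, g i * (TQ i)⁻¹
          * (-(kQ i * reactiveQ n B bhat θ V i) - V i * (V i - uQ i))
    =
    -∑ i, (ω i - ωbar i) * (kP i)⁻¹ * (ω i - ωbar i)
      + ∑ i, (ω i - ωbar i) * (kP i)⁻¹ * (uP i - uPbar i)
      - ∑ i, g i * (TQ i)⁻¹ * (kQ i * V i) * g i
      + ∑ i, g i * (TQ i)⁻¹ * V i * (uQ i - uQbar i) :=
  quadratic_droop_incremental_cyclo_dissipativity_general n B hBsymm bhat kP TQ kQ hkP hkQ ωstar
    Pstar θbar ωbar Vbar ω0 hVbar hωbar uPbar uQbar huPbar huQbar θ ω V uP uQ hV g hg
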